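/- arXiv:1802.01937 — 5 statements merged into one kernel-verified Lean document; each statement's English description precedes it below -/
import Mathlib

section
/- Let g be a finite-dimensional Lie algebra over k whose dual g* carries a Lie algebra bracket [·,·]*. Suppose there exist x ∈ Z(g) (the center of g) and ξ ∈ g* with ad*_ξ(x) ∉ Z(g). Then there is no k-linear map S : g* → End(g*) satisfying −ad*_y ∘ S(η) + S(η) ∘ ad*_y + S(ad*_y η) + ad*_{ad*_η y} = 0 for all y ∈ g and η ∈ g*. (In particular, the Atiyah class of the Lie pair (g ⋈ g*, g) does not vanish.) -/
/-!
If `x` is central then `ad*_x = 0`, so the cocycle equation at `y = x` collapses to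
`ad*_{ad*_η x} = 0`. Since `g*` separates the points of `g`, this forces `ad_{ad*_η x} = 0`,
i.e. `ad*_η x` is central for every `η`.
-/

open Module

attribute [local instance 100] LieRing.ofAssociativeRing

variable (k : Type*) [Field k] (g : Type*) [LieRing g] [LieAlgebra k g]

/-- `adStar k g x` is the dual (transpose) of `ad x : g →ₗ[k] g`,
so `adStar k g x ξ y = ξ ⁅x, y⁆`. -/
noncomputable def adStar : g →ₗ[k] Module.End k (Module.Dual k g) :=
  (Module.Dual.transpose (R := k)) ∘ₗ (LieAlgebra.ad k g).toLinearMap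

theorem Module.Dual.transpose_eq_zero_iff {R M M' : Type*} [CommRing R] [AddCommGroup M]
    [Module R M] [AddCommGroup M'] [Module R M'] [Projective R M'] {u : M →ₗ[R] M'} :
    Module.Dual.transpose u = 0 ↔ u = 0 := by
  refine ⟨fun h ↦ LinearMap.ext fun v ↦ ?_, fun h ↦ h ▸ map_zero _⟩
  refine (forall_dual_apply_eq_zero_iff R (u v)).mp fun φ ↦ ?_
  exact LinearMap.congr_fun (LinearMap.congr_fun h φ) v

theorem LieAlgebra.ad_eq_zero_iff_mem_center {R L : Type*} [CommRing R] [LieRing L]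
    [LieAlgebra R L] {x : L} : ad R L x = 0 ↔ x ∈ center R L := by
  rw [← LieHom.mem_ker, ad_ker_eq_self_module_ker, self_module_ker_eq_center]

variable {k g}

theorem adStar_eq_zero_iff_mem_center {x : g} :
    adStar k g x = 0 ↔ x ∈ LieAlgebra.center k g := by
  rw [← LieAlgebra.ad_eq_zero_iff_mem_center]
  exact Module.Dual.transpose_eq_zero_iff

theorem astar_mem_center_of_atiyah_cocycle
    {astar : Module.Dual k g →ₗ[k] g →ₗ[k] g}
    {S : Module.Dual k g →ₗ[k] Module.End k (Module.Dual k g)} {x : g} {η : Module.Dual k g}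
    (hS : -(adStar k g x * S η) + S η * adStar k g x + S (adStar k g x η)
      + adStar k g (astar η x) = 0)
    (hx : x ∈ LieAlgebra.center k g) :
    astar η x ∈ LieAlgebra.center k g := by
  rw [adStar_eq_zero_iff_mem_center.mpr hx] at hS
  simp only [mul_zero, zero_mul, LinearMap.zero_apply, map_zero, add_zero] at hS
  have h : adStar k g (astar η x) = 0 := by
    rw [← hS]
    abel
  exact adStar_eq_zero_iff_mem_center.mp h

theorem no_compatible_connection_of_center_not_invariant_general
    (astar : Module.Dual k g →ₗ[k] g →ₗ[k] g)
    (x : g) (hx : x ∈ LieAlgebra.center k g)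
    (ξ : Module.Dual k g) (hξ : astar ξ x ∉ LieAlgebra.center k g) :
    ¬ ∃ S : Module.Dual k g →ₗ[k] Module.End k (Module.Dual k g),
        ∀ (y : g) (η : Module.Dual k g),
          -(adStar k g y * S η) + S η * adStar k g y + S (adStar k g y η)
            + adStar k g (astar η y) = 0 := by
  rintro ⟨S, hS⟩
  exact hξ (astar_mem_center_of_atiyah_cocycle (hS x ξ) hx)

/-- If some `x ∈ Z(g)` and `ξ ∈ g*` satisfy `ad*_ξ x ∉ Z(g)`, then there is no linear map
`S : g* → End(g*)` satisfying the Atiyah cocycle equation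
`−ad*_y ∘ S(η) + S(η) ∘ ad*_y + S(ad*_y η) + ad*_{ad*_η y} = 0` for all `y, η`.
(In particular the Atiyah class of the Lie pair `(g ⋈ g*, g)` does not vanish.) -/
theorem no_compatible_connection_of_center_not_invariant [FiniteDimensional k g]
    (br : Module.Dual k g →ₗ[k] Module.Dual k g →ₗ[k] Module.Dual k g)
    (hskew : ∀ ξ, br ξ ξ = 0)
    (hjac : ∀ ξ η ζ, br ξ (br η ζ) = br (br ξ η) ζ + br η (br ξ ζ))
    (astar : Module.Dual k g →ₗ[k] g →ₗ[k] g)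
    (hastar : ∀ (ξ η : Module.Dual k g) (x : g), η (astar ξ x) = br ξ η x)
    (x : g) (hx : x ∈ LieAlgebra.center k g)
    (ξ : Module.Dual k g) (hξ : astar ξ x ∉ LieAlgebra.center k g) :
    ¬ ∃ S : Module.Dual k g →ₗ[k] Module.End k (Module.Dual k g),
        ∀ (y : g) (η : Module.Dual k g),
          -(adStar k g y * S η) + S η * adStar k g y + S (adStar k g y η)
            + adStar k g (astar η y) = 0 :=
  no_compatible_connection_of_center_not_invariant_general astar x hx ξ hξ
end

section
/- Let g be a finite-dimensional Lie algebra over k whose dual g* carries a Lie algebra bracket [·,·]*, and let κ ∈ g* be the modular element defined by κ(x) = trace(ad_x). Then the trace of the Atiyah cocycle λ(x)(ξ) = ad*_{ad*_ξ x} is given, up to sign, by contraction of the cobracket with κ: for all x ∈ g and ξ ∈ g*, trace(ad*_{ad*_ξ x}) = −ξ(ad*_κ(x)). -/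
open Module

attribute [local instance 100] LieRing.ofAssociativeRing

variable (k : Type*) [Field k] (g : Type*) [LieRing g] [LieAlgebra k g]

/-- The modular element `κ ∈ g*` of the Lie algebra `g`, `κ(x) = trace (ad x)`. -/
noncomputable def modularVec : Module.Dual k g :=
  (LinearMap.trace k g) ∘ₗ (LieAlgebra.ad k g).toLinearMap

/-- The trace of the Atiyah cocycle `λ(x)(ξ) = ad*_{ad*_ξ x}` is, up to sign, the
contraction of the cobracket with the modular element `κ`:
`trace (ad*_{ad*_ξ x}) = −ξ (ad*_κ x)` for all `x ∈ g`, `ξ ∈ g*`. -/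
theorem trace_atiyah_cocycle [FiniteDimensional k g]
    (br : Module.Dual k g →ₗ[k] Module.Dual k g →ₗ[k] Module.Dual k g)
    (hskew : ∀ ξ, br ξ ξ = 0)
    (hjac : ∀ ξ η ζ, br ξ (br η ζ) = br (br ξ η) ζ + br η (br ξ ζ))
    (astar : Module.Dual k g →ₗ[k] g →ₗ[k] g)
    (hastar : ∀ (ξ η : Module.Dual k g) (x : g), η (astar ξ x) = br ξ η x) :
    ∀ (x : g) (ξ : Module.Dual k g),
      LinearMap.trace k (Module.Dual k g) (adStar k g (astar ξ x))
        = - ξ (astar (modularVec k g) x) := by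
  intro x ξ
  have hanti : ∀ ξ η : Module.Dual k g, br ξ η = - br η ξ := by
    intro ξ η
    have h := hskew (ξ + η)
    simp only [map_add, LinearMap.add_apply, hskew] at h
    linear_combination (norm := abel) h
  have h1 : LinearMap.trace k (Module.Dual k g) (adStar k g (astar ξ x))
      = modularVec k g (astar ξ x) := by
    simp [adStar, modularVec, LinearMap.trace_transpose']
  rw [h1, hastar ξ (modularVec k g) x, hanti]
  simp [← hastar (modularVec k g) ξ x]
end

section
/- Let n ≥ 2 and let sb(n,ℂ) be the real Lie algebra of n×n complex matrices A that are upper triangular (A i j = 0 whenever i > j), have real diagonal entries, and have trace zero, with the matrix commutator bracket. Then the ℝ-linear functional κ on sb(n,ℂ) given by κ(x) = tr_ℝ(ad_x), where ad_x is the ℝ-linear endomorphism y ↦ x y − y x of sb(n,ℂ) and tr_ℝ denotes the trace of an ℝ-linear endomorphism, is not identically zero. -/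
open Matrix

attribute [local instance 100] LieRing.ofAssociativeRing

/-- `sb n` is the real Lie algebra of `n × n` traceless upper triangular complex matrices
with real diagonal entries, inside `Matrix (Fin n) (Fin n) ℂ` with the commutator bracket. -/
def sb (n : ℕ) : LieSubalgebra ℝ (Matrix (Fin n) (Fin n) ℂ) where
  carrier := {A | (∀ i j, j < i → A i j = 0) ∧ (∀ i, (A i i).im = 0) ∧ A.trace = 0}
  add_mem' := by
    rintro A B ⟨hA1, hA2, hA3⟩ ⟨hB1, hB2, hB3⟩
    refine ⟨fun i j hij => ?_, fun i => ?_, ?_⟩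
    · simp [Matrix.add_apply, hA1 i j hij, hB1 i j hij]
    · simp [Matrix.add_apply, Complex.add_im, hA2 i, hB2 i]
    · simp [Matrix.trace_add, hA3, hB3]
  zero_mem' := by
    refine ⟨fun i j _ => rfl, fun i => ?_, ?_⟩ <;> simp
  smul_mem' := by
    rintro r A ⟨hA1, hA2, hA3⟩
    refine ⟨fun i j hij => ?_, fun i => ?_, ?_⟩
    · simp [Matrix.smul_apply, hA1 i j hij]
    · simp [Matrix.smul_apply, Complex.smul_im, hA2 i]
    · simp [Matrix.trace_smul, hA3]
  lie_mem' := by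
    rintro A B ⟨hA1, hA2, hA3⟩ ⟨hB1, hB2, hB3⟩
    have hAB : ∀ i j, j < i → (A * B) i j = 0 := by
      intro i j hij
      rw [Matrix.mul_apply]
      refine Finset.sum_eq_zero fun l _ => ?_
      rcases lt_or_ge l i with h | h
      · rw [hA1 i l h, zero_mul]
      · rw [hB1 l j (lt_of_lt_of_le hij h), mul_zero]
    have hBA : ∀ i j, j < i → (B * A) i j = 0 := by
      intro i j hij
      rw [Matrix.mul_apply]
      refine Finset.sum_eq_zero fun l _ => ?_
      rcases lt_or_ge l i with h | h
      · rw [hB1 i l h, zero_mul]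
      · rw [hA1 l j (lt_of_lt_of_le hij h), mul_zero]
    have hdiagA : ∀ i, (A * B) i i = A i i * B i i := by
      intro i
      rw [Matrix.mul_apply]
      refine Finset.sum_eq_single i (fun l _ hl => ?_) (by simp)
      rcases lt_or_ge l i with h | h
      · rw [hA1 i l h, zero_mul]
      · rw [hB1 l i (lt_of_le_of_ne h (Ne.symm hl)), mul_zero]
    have hdiagB : ∀ i, (B * A) i i = B i i * A i i := by
      intro i
      rw [Matrix.mul_apply]
      refine Finset.sum_eq_single i (fun l _ hl => ?_) (by simp)
      rcases lt_or_ge l i with h | h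
      · rw [hB1 i l h, zero_mul]
      · rw [hA1 l i (lt_of_le_of_ne h (Ne.symm hl)), mul_zero]
    rw [Ring.lie_def]
    refine ⟨fun i j hij => ?_, fun i => ?_, ?_⟩
    · simp [Matrix.sub_apply, hAB i j hij, hBA i j hij]
    · simp [Matrix.sub_apply, hdiagA i, hdiagB i, mul_comm]
    · rw [Matrix.trace_sub, Matrix.trace_mul_comm, sub_self]

namespace SbAux

open Matrix Complex

variable (m : ℕ)

/-- Index type for a real basis of `sb (m+2)`. -/
abbrev ι (m : ℕ) := ({p : Fin (m+2) × Fin (m+2) // p.1 < p.2} × Bool) ⊕ Fin (m+1)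

/-- Reconstruct a matrix in `sb (m+2)` from coordinates. -/
noncomputable def mat (f : ι m → ℝ) : Matrix (Fin (m+2)) (Fin (m+2)) ℂ :=
  fun i j =>
    if h : i < j then
      (f (Sum.inl (⟨(i,j), h⟩, false)) : ℂ) + (f (Sum.inl (⟨(i,j), h⟩, true)) : ℂ) * Complex.I
    else if h' : i = j then
      ((if hl : i ≠ Fin.last (m+1) then f (Sum.inr (i.castPred hl))
        else -(∑ k : Fin (m+1), f (Sum.inr k)) : ℝ) : ℂ)
    else 0

lemma mat_mem (f : ι m → ℝ) : mat m f ∈ sb (m+2) := by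
  refine ⟨fun i j hij => ?_, fun i => ?_, ?_⟩
  · simp only [mat]
    rw [dif_neg (asymm hij), dif_neg (ne_of_gt hij)]
  · simp only [mat, dif_neg (lt_irrefl i), dif_pos rfl]
    exact Complex.ofReal_im _
  · have hdiag : ∀ i : Fin (m+2), mat m f i i =
        ((if hl : i ≠ Fin.last (m+1) then f (Sum.inr (i.castPred hl))
          else -(∑ k : Fin (m+1), f (Sum.inr k)) : ℝ) : ℂ) := by
      intro i
      simp only [mat, dif_neg (lt_irrefl i), dif_pos rfl]
      simp
    rw [Matrix.trace]
    simp only [Matrix.diag]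
    rw [Fin.sum_univ_castSucc]
    have h1 : ∀ k : Fin (m+1), mat m f k.castSucc k.castSucc = (f (Sum.inr k) : ℂ) := by
      intro k
      rw [hdiag, dif_pos (Fin.ne_last_of_lt (Fin.castSucc_lt_last k))]
      simp
    have h2 : mat m f (Fin.last (m+1)) (Fin.last (m+1)) =
        ((-(∑ k : Fin (m+1), f (Sum.inr k)) : ℝ) : ℂ) := by
      rw [hdiag, dif_neg (by simp)]
    simp only [h1, h2]
    push_cast
    ring

/-- Coordinates of a matrix. -/
def coordFun (A : Matrix (Fin (m+2)) (Fin (m+2)) ℂ) : ι m → ℝ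
  | Sum.inl (p, false) => (A p.1.1 p.1.2).re
  | Sum.inl (p, true) => (A p.1.1 p.1.2).im
  | Sum.inr k => (A k.castSucc k.castSucc).re

/-- The coordinate linear map. -/
def phi : sb (m+2) →ₗ[ℝ] (ι m → ℝ) where
  toFun A := coordFun m A.1
  map_add' A B := by
    funext k
    rcases k with ⟨p, _ | _⟩ | k <;>
      simp [coordFun, Matrix.add_apply]
  map_smul' r A := by
    have hsm : ((r • A : sb (m+2)) : Matrix (Fin (m+2)) (Fin (m+2)) ℂ)
        = r • (A : Matrix (Fin (m+2)) (Fin (m+2)) ℂ) := rfl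
    funext k
    rcases k with ⟨p, _ | _⟩ | k <;>
      simp [coordFun, hsm, Matrix.smul_apply, Complex.smul_re,
        Complex.smul_im, smul_eq_mul]

/-- The reconstruction linear map. -/
noncomputable def psi : (ι m → ℝ) →ₗ[ℝ] sb (m+2) where
  toFun f := ⟨mat m f, mat_mem m f⟩
  map_add' f g := by
    apply Subtype.ext
    change mat m (f + g) = mat m f + mat m g
    funext i j
    simp only [mat, Matrix.add_apply, Pi.add_apply]
    split_ifs <;> push_cast [Finset.sum_add_distrib] <;> ring
  map_smul' r f := by
    apply Subtype.ext
    change mat m (r • f) = r • mat m f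
    funext i j
    simp only [mat, Matrix.smul_apply, Pi.smul_apply, smul_eq_mul, Complex.real_smul]
    split_ifs with h1 h2 h3
    · push_cast; ring
    · push_cast; ring
    · push_cast
      rw [mul_neg, Finset.mul_sum]
    · push_cast; ring

lemma phi_apply (A : sb (m+2)) (k : ι m) : phi m A k = coordFun m A.1 k := rfl

lemma psi_coe (f : ι m → ℝ) : ((psi m f : sb (m+2)) : Matrix (Fin (m+2)) (Fin (m+2)) ℂ) = mat m f := rfl

lemma phi_psi (f : ι m → ℝ) : phi m (psi m f) = f := by
  funext k
  rw [phi_apply, psi_coe]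
  rcases k with ⟨⟨⟨i, j⟩, hij⟩, bb⟩ | k
  · cases bb <;>
    · simp only [coordFun, mat, dif_pos hij]
      simp
  · simp only [coordFun, mat, dif_neg (lt_irrefl _), dif_pos rfl,
      dif_pos (Fin.ne_last_of_lt (Fin.castSucc_lt_last k))]
    simp

lemma psi_phi (A : sb (m+2)) : psi m (phi m A) = A := by
  obtain ⟨A, hA1, hA2, hA3⟩ := A
  apply Subtype.ext
  show mat m (coordFun m A) = A
  funext i j
  simp only [mat]
  split_ifs with h h' hl
  · simp only [coordFun]
    exact Complex.re_add_im _
  · subst h'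
    simp only [coordFun, Fin.castSucc_castPred]
    exact Complex.ext (by simp) (by simp [hA2 i])
  · subst h'
    rw [not_not] at hl
    subst hl
    have ht : ∑ i : Fin (m+2), A i i = 0 := by
      rw [Matrix.trace] at hA3
      exact hA3
    rw [Fin.sum_univ_castSucc] at ht
    have he : ∀ k : Fin (m+1),
        ((coordFun m A (Sum.inr k) : ℝ) : ℂ) = A k.castSucc k.castSucc := by
      intro k
      exact Complex.ext (by simp [coordFun]) (by simp [coordFun, hA2 _])
    push_cast
    rw [Finset.sum_congr rfl fun k _ => he k]
    linear_combination -ht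
  · have hji : j < i := lt_of_le_of_ne (not_lt.mp h) (Ne.symm h')
    exact (hA1 i j hji).symm

/-- The coordinate linear equivalence. -/
noncomputable def e : sb (m+2) ≃ₗ[ℝ] (ι m → ℝ) :=
  LinearEquiv.ofLinear (phi m) (psi m)
    (LinearMap.ext (phi_psi m)) (LinearMap.ext (psi_phi m))

/-- The diagonal entries of our witness element. -/
def d (i : Fin (m+2)) : ℝ :=
  (if i = 0 then 1 else 0) - (if i = Fin.last (m+1) then 1 else 0)

/-- The witness matrix. -/
noncomputable def X : Matrix (Fin (m+2)) (Fin (m+2)) ℂ :=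
  Matrix.diagonal (fun i => (d m i : ℂ))

lemma X_mem : X m ∈ sb (m+2) := by
  refine ⟨fun i j hij => ?_, fun i => ?_, ?_⟩
  · exact Matrix.diagonal_apply_ne _ (ne_of_gt hij)
  · simp [X, Matrix.diagonal_apply_eq]
  · rw [X, Matrix.trace_diagonal]
    have : ∑ i : Fin (m+2), (d m i : ℂ) = ((∑ i : Fin (m+2), d m i : ℝ) : ℂ) := by
      push_cast; ring
    rw [this]
    have : ∑ i : Fin (m+2), d m i = 0 := by
      simp only [d, Finset.sum_sub_distrib]
      rw [Finset.sum_ite_eq' Finset.univ (0 : Fin (m+2)) (fun _ => (1:ℝ)),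
        Finset.sum_ite_eq' Finset.univ (Fin.last (m+1)) (fun _ => (1:ℝ))]
      simp
    rw [this]
    simp

lemma comm_entry (B : Matrix (Fin (m+2)) (Fin (m+2)) ℂ) (i j : Fin (m+2)) :
    (X m * B - B * X m) i j = ((d m i - d m j : ℝ) : ℂ) * B i j := by
  simp only [X, Matrix.sub_apply, Matrix.diagonal_mul, Matrix.mul_diagonal]
  push_cast
  ring

end SbAux

/-- The modular functional `κ(x) = tr_ℝ(ad_x)` of the real Lie algebra `sb(n, ℂ)` is not
identically zero for `n ≥ 2`. -/
theorem modular_sb_ne_zero (n : ℕ) (hn : 2 ≤ n) :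
    ∃ x : sb n, LinearMap.trace ℝ (sb n) ((LieAlgebra.ad ℝ (sb n)) x) ≠ 0 := by
  obtain ⟨m, rfl⟩ : ∃ m, n = m + 2 := ⟨n - 2, by omega⟩
  clear hn
  set x : sb (m+2) := ⟨SbAux.X m, SbAux.X_mem m⟩ with hx
  refine ⟨x, ?_⟩
  rw [← LinearMap.trace_conj' _ (SbAux.e m),
    LinearMap.trace_eq_matrix_trace ℝ (Pi.basisFun ℝ (SbAux.ι m))]
  have hdiag : ∀ k : SbAux.ι m,
      LinearMap.toMatrix (Pi.basisFun ℝ (SbAux.ι m)) (Pi.basisFun ℝ (SbAux.ι m))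
        ((SbAux.e m).conj ((LieAlgebra.ad ℝ (sb (m+2))) x)) k k =
      SbAux.coordFun m (SbAux.X m * SbAux.mat m (Pi.single k 1)
        - SbAux.mat m (Pi.single k 1) * SbAux.X m) k := by
    intro k
    rw [LinearMap.toMatrix_apply, Pi.basisFun_apply, Pi.basisFun_repr,
      LinearEquiv.conj_apply_apply, SbAux.e, LinearEquiv.ofLinear_symm_apply,
      LinearEquiv.ofLinear_apply, LieAlgebra.ad_apply, SbAux.phi_apply]
    rfl
  rw [Matrix.trace]
  simp only [Matrix.diag]
  rw [Finset.sum_congr rfl fun k _ => hdiag k]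
  rw [Fintype.sum_sum_type]
  have hinr : ∀ k : Fin (m+1),
      SbAux.coordFun m (SbAux.X m * SbAux.mat m (Pi.single (Sum.inr k) 1)
        - SbAux.mat m (Pi.single (Sum.inr k) 1) * SbAux.X m) (Sum.inr k) = 0 := by
    intro k
    simp [SbAux.coordFun, SbAux.X, Matrix.diagonal_mul, Matrix.mul_diagonal,
      Complex.mul_re, Complex.mul_im]
    ring
  have hinl : ∀ p : {p : Fin (m+2) × Fin (m+2) // p.1 < p.2}, ∀ bb : Bool,
      SbAux.coordFun m (SbAux.X m * SbAux.mat m (Pi.single (Sum.inl (p, bb)) 1)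
        - SbAux.mat m (Pi.single (Sum.inl (p, bb)) 1) * SbAux.X m) (Sum.inl (p, bb)) =
      SbAux.d m p.1.1 - SbAux.d m p.1.2 := by
    rintro ⟨⟨i, j⟩, hij⟩ bb
    have hent : ∀ bb : Bool, SbAux.mat m (Pi.single (Sum.inl (⟨(i,j),hij⟩, bb)) 1) i j
        = if bb then Complex.I else 1 := by
      intro bb
      simp only [SbAux.mat, dif_pos hij]
      cases bb <;> simp [Pi.single_apply]
    cases bb <;>
      simp [SbAux.coordFun, SbAux.X, Matrix.diagonal_mul, Matrix.mul_diagonal, hent,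
        Complex.mul_re, Complex.mul_im]
  rw [Finset.sum_congr rfl fun k _ => hinr k, Finset.sum_const_zero, add_zero]
  rw [Fintype.sum_prod_type]
  have hinl2 : ∀ p : {p : Fin (m+2) × Fin (m+2) // p.1 < p.2},
      ∑ bb : Bool, SbAux.coordFun m (SbAux.X m * SbAux.mat m (Pi.single (Sum.inl (p, bb)) 1)
        - SbAux.mat m (Pi.single (Sum.inl (p, bb)) 1) * SbAux.X m) (Sum.inl (p, bb))
      = 2 * (SbAux.d m p.1.1 - SbAux.d m p.1.2) := by
    intro p
    rw [Fintype.sum_bool, hinl p true, hinl p false]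
    ring
  rw [Finset.sum_congr rfl fun p _ => hinl2 p]
  have hpos : 0 < ∑ p : {p : Fin (m+2) × Fin (m+2) // p.1 < p.2},
      2 * (SbAux.d m p.1.1 - SbAux.d m p.1.2) := by
    apply Finset.sum_pos'
    · rintro ⟨⟨i, j⟩, hij⟩ _
      have hj0 : j ≠ 0 := Fin.pos_iff_ne_zero.mp (lt_of_le_of_lt (Fin.zero_le i) hij)
      have hil : i ≠ Fin.last (m+1) := Fin.ne_last_of_lt hij
      simp only [SbAux.d, if_neg hj0, if_neg hil]
      have : (0:ℝ) ≤ (if i = 0 then (1:ℝ) else 0) := by split <;> norm_num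
      have h2 : (0:ℝ) ≤ (if j = Fin.last (m+1) then (1:ℝ) else 0) := by split <;> norm_num
      nlinarith
    · have h0l : (0 : Fin (m+2)) < Fin.last (m+1) := by
        rw [Fin.lt_def]; simp
      refine ⟨⟨(0, Fin.last (m+1)), h0l⟩, Finset.mem_univ _, ?_⟩
      have h0 : (0 : Fin (m+2)) ≠ Fin.last (m+1) := ne_of_lt h0l
      simp only [SbAux.d, if_pos rfl, if_neg h0, if_neg (Ne.symm h0)]
      norm_num
  exact ne_of_gt hpos
end

section
/- Let n ≥ 2. Let κ be any n×n complex matrix that is traceless and skew-Hermitian (κᴴ = −κ, tr κ = 0) and satisfies Im(tr(x · κ)) = tr_ℝ(ad_x) for all x ∈ sb(n,ℂ), where ad_x : sb(n,ℂ) → sb(n,ℂ) is y ↦ x y − y x and tr_ℝ is the trace as an ℝ-linear endomorphism. Then for every v ∈ sb(n,ℂ) there exists x ∈ sb(n,ℂ) such that the matrix commutator (κ + v) x − x (κ + v) is nonzero. (Consequently the first scalar Atiyah class, and hence the Atiyah class, of the triple (sl(n,ℂ), sb(n,ℂ), su(n)) does not vanish.) -/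
open Matrix

attribute [local instance 100] LieRing.ofAssociativeRing

section Aux
variable {n : ℕ}

lemma sbAux_stdBasis_mem {i j : Fin n} (hij : i < j) :
    single i j (1:ℂ) ∈ sb n := by
  refine ⟨fun a b hba => ?_, fun a => ?_, ?_⟩
  · apply Matrix.single_apply_of_ne
    rintro ⟨rfl, rfl⟩; exact absurd hij (not_lt.mpr hba.le)
  · rw [Matrix.single_apply_of_ne]
    · simp
    · rintro ⟨rfl, rfl⟩; exact lt_irrefl _ hij
  · exact Matrix.trace_single_eq_of_ne i j 1 hij.ne

lemma sbAux_diagPair_mem {k l : Fin n} (hkl : k ≠ l) :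
    single k k (1:ℂ) - single l l 1 ∈ sb n := by
  refine ⟨fun a b hba => ?_, fun a => ?_, ?_⟩
  · rw [Matrix.sub_apply,
      Matrix.single_apply_of_ne _ _ _ _ _ (by rintro ⟨rfl, rfl⟩; exact lt_irrefl _ hba),
      Matrix.single_apply_of_ne _ _ _ _ _ (by rintro ⟨rfl, rfl⟩; exact lt_irrefl _ hba),
      sub_zero]
  · simp only [Matrix.sub_apply, Matrix.single, Matrix.of_apply]
    split_ifs <;> simp
  · simp [Matrix.trace_sub, Matrix.trace_single_eq_same]

lemma sbAux_x0_mem (hn : 0 < n) {i0 : Fin n} (hi0 : (i0 : ℕ) = 0) :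
    (n:ℂ) • single i0 i0 1 - 1 ∈ sb n := by
  refine ⟨fun a b hba => ?_, fun a => ?_, ?_⟩
  · rw [Matrix.sub_apply, Matrix.smul_apply,
      Matrix.single_apply_of_ne _ _ _ _ _ (by rintro ⟨rfl, rfl⟩; exact lt_irrefl _ hba),
      Matrix.one_apply_ne (by exact fun h => lt_irrefl a (h ▸ hba)), smul_zero, sub_zero]
  · rw [Matrix.sub_apply, Matrix.smul_apply, Matrix.one_apply_eq]
    by_cases ha : a = i0
    · rw [ha, Matrix.single_apply_same]
      simp
    · rw [Matrix.single_apply_of_ne _ _ _ _ _ (by tauto), smul_zero]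
      simp
  · rw [Matrix.trace_sub, Matrix.trace_smul, Matrix.trace_single_eq_same, Matrix.trace_one]
    simp

lemma sbAux_key (i0 : Fin n) (Y : Matrix (Fin n) (Fin n) ℂ)
    (hcol : ∀ a, a ≠ i0 → Y a i0 = 0) :
    ((n:ℂ) • single i0 i0 1 - 1) *
        (((n:ℂ) • single i0 i0 1 - 1) * Y - Y * ((n:ℂ) • single i0 i0 1 - 1)) -
      (((n:ℂ) • single i0 i0 1 - 1) * Y - Y * ((n:ℂ) • single i0 i0 1 - 1)) *
        ((n:ℂ) • single i0 i0 1 - 1) =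
    (n:ℂ) • (((n:ℂ) • single i0 i0 1 - 1) * Y - Y * ((n:ℂ) • single i0 i0 1 - 1)) := by
  have hE2 : single i0 i0 (1:ℂ) * single i0 i0 1 = single i0 i0 1 := by
    simp
  have hYE : Y * single i0 i0 1 = Y i0 i0 • single i0 i0 1 := by
    ext a b
    by_cases hb : b = i0
    · rw [hb, Matrix.smul_apply, Matrix.mul_single_apply_same, mul_one]
      by_cases ha : a = i0
      · rw [ha]; simp
      · rw [hcol a ha, Matrix.single_apply_of_ne _ _ _ _ _ (by tauto), smul_zero]
    · rw [Matrix.mul_single_apply_of_ne _ _ _ _ _ hb, Matrix.smul_apply,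
        Matrix.single_apply_of_ne _ _ _ _ _ (by tauto), smul_zero]
  have hEYE : single i0 i0 (1:ℂ) * Y * single i0 i0 1
      = Y i0 i0 • single i0 i0 1 := by
    rw [mul_assoc, hYE, mul_smul_comm, hE2]
  have expand : ∀ W : Matrix (Fin n) (Fin n) ℂ,
      ((n:ℂ) • single i0 i0 1 - 1) * W - W * ((n:ℂ) • single i0 i0 1 - 1)
        = (n:ℂ) • (single i0 i0 1 * W - W * single i0 i0 1) := by
    intro W
    simp only [sub_mul, mul_sub, Matrix.smul_mul, Matrix.mul_smul, one_mul, mul_one, smul_sub]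
    abel
  rw [expand, expand Y]
  simp only [Matrix.mul_smul, Matrix.smul_mul, mul_sub, sub_mul, smul_sub, hYE, mul_smul_comm,
    ← mul_assoc, hE2, hEYE]
  abel

end Aux

set_option maxHeartbeats 1000000 in
/-- Let `κ ∈ su(n)` (traceless skew-Hermitian) represent the modular functional of
`sb(n,ℂ)` via the pairing `⟨x, ξ⟩ = Im (tr (x ξ))`, i.e.
`Im (tr (x κ)) = tr_ℝ (ad_x)` for all `x ∈ sb(n,ℂ)`.  Then for every `v ∈ sb(n,ℂ)` there is
`x ∈ sb(n,ℂ)` with `⁅κ + v, x⁆ ≠ 0`; consequently the first scalar Atiyah class (hence the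
Atiyah class) of the triple `(sl(n,ℂ), sb(n,ℂ), su(n))` does not vanish. -/
theorem modular_plus_v_not_central (n : ℕ) (hn : 2 ≤ n)
    (κ : Matrix (Fin n) (Fin n) ℂ) (hκ1 : κᴴ = -κ) (hκ2 : κ.trace = 0)
    (hκ3 : ∀ x : sb n, (((x : Matrix (Fin n) (Fin n) ℂ) * κ).trace).im
      = LinearMap.trace ℝ (sb n) ((LieAlgebra.ad ℝ (sb n)) x)) :
    ∀ v : sb n, ∃ x : sb n,
      (κ + (v : Matrix (Fin n) (Fin n) ℂ)) * (x : Matrix (Fin n) (Fin n) ℂ)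
        - (x : Matrix (Fin n) (Fin n) ℂ) * (κ + (v : Matrix (Fin n) (Fin n) ℂ)) ≠ 0 := by
  intro v
  by_contra hcon
  push_neg at hcon
  have hn0 : (0:ℕ) < n := by omega
  set i0 : Fin n := ⟨0, by omega⟩ with hi0
  set i1 : Fin n := ⟨1, by omega⟩ with hi1
  have hi01 : i0 < i1 := by simp [hi0, hi1, Fin.lt_def]
  set A : Matrix (Fin n) (Fin n) ℂ := κ + (v : Matrix (Fin n) (Fin n) ℂ) with hA
  obtain ⟨hv1, hv2, hv3⟩ := v.2
  -- Step 1: off-diagonal entries of A vanish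
  have hoff : ∀ k l : Fin n, k ≠ l → A k l = 0 := by
    intro k l hkl
    have hm : A * (single k k (1:ℂ) - single l l 1)
        - (single k k (1:ℂ) - single l l 1) * A = 0 :=
      hcon ⟨_, sbAux_diagPair_mem hkl⟩
    have he := Matrix.ext_iff.2 hm k l
    rw [Matrix.zero_apply] at he
    rw [Matrix.sub_apply, Matrix.mul_sub, Matrix.sub_mul, Matrix.sub_apply, Matrix.sub_apply,
      Matrix.mul_single_apply_of_ne _ _ _ _ _ hkl.symm,
      Matrix.mul_single_apply_same,
      Matrix.single_mul_apply_same,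
      Matrix.single_mul_apply_of_ne _ _ _ _ _ hkl] at he
    simp only [mul_one, one_mul, zero_sub, sub_zero] at he
    linear_combination (-1/2 : ℂ) * he
  -- Step 2: diagonal entries of A are all equal
  have hdiag : ∀ a : Fin n, A a a = A i0 i0 := by
    have key : ∀ i j : Fin n, i < j → A i i = A j j := by
      intro i j hij
      have hm : A * single i j (1:ℂ) - single i j (1:ℂ) * A = 0 :=
        hcon ⟨_, sbAux_stdBasis_mem hij⟩
      have hcomm : Commute (single i j (1:ℂ)) A :=
        (sub_eq_zero.mp hm).symm
      exact Matrix.diag_eq_of_commute_single hcomm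
    intro a
    rcases lt_trichotomy a i0 with h | h | h
    · exact (key a i0 h).symm ▸ rfl
    · rw [h]
    · exact (key i0 a h).symm
    -- Step 3: A = 0, hence κ = -v, hence v = 0, κ = 0
  have hnC : (n:ℂ) ≠ 0 := Nat.cast_ne_zero.mpr (by omega)
  have hAt : A.trace = (n:ℂ) * A i0 i0 := by
    have h1 : A.trace = ∑ _a : Fin n, A i0 i0 := Finset.sum_congr rfl (fun a _ => hdiag a)
    rw [h1, Finset.sum_const, Finset.card_univ, Fintype.card_fin, nsmul_eq_mul]
  have hAtr : A.trace = 0 := by rw [hA, Matrix.trace_add, hκ2, hv3, add_zero]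
  have hc0 : A i0 i0 = 0 := by
    have := hAt ▸ hAtr
    exact (mul_eq_zero.mp this).resolve_left hnC
  have hA0 : A = 0 := by
    ext a b
    by_cases hab : a = b
    · rw [hab, hdiag b, hc0, Matrix.zero_apply]
    · rw [hoff a b hab, Matrix.zero_apply]
  have hκv : κ = -(v : Matrix (Fin n) (Fin n) ℂ) :=
    eq_neg_of_add_eq_zero_left (hA ▸ hA0)
  have hv0 : (v : Matrix (Fin n) (Fin n) ℂ) = 0 := by
    have hvconj : ∀ i j : Fin n,
        star ((v : Matrix (Fin n) (Fin n) ℂ) j i)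
          = -(v : Matrix (Fin n) (Fin n) ℂ) i j := by
      intro i j
      have h1 := Matrix.ext_iff.2 hκ1 i j
      rw [Matrix.conjTranspose_apply, hκv] at h1
      simp only [Matrix.neg_apply, star_neg, neg_neg] at h1
      linear_combination -h1
    ext i j
    rcases lt_trichotomy i j with h | h | h
    · have := hvconj i j
      rw [hv1 j i h, star_zero] at this
      rw [Matrix.zero_apply]
      linear_combination this
    · rw [h, Matrix.zero_apply]
      have := hvconj j j
      have h2 : star ((v : Matrix (Fin n) (Fin n) ℂ) j j)
          = (v : Matrix (Fin n) (Fin n) ℂ) j j := Complex.conj_eq_iff_im.mpr (hv2 j)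
      rw [h2] at this
      linear_combination this / 2
    · rw [hv1 i j h, Matrix.zero_apply]
  have hκ0 : κ = 0 := by rw [hκv, hv0, neg_zero]
  -- Step 4: the trace of ad is both zero and positive
  have htr0 : ∀ x : sb n, LinearMap.trace ℝ (sb n) ((LieAlgebra.ad ℝ (sb n)) x) = 0 := by
    intro x
    rw [← hκ3 x, hκ0, mul_zero, Matrix.trace_zero, Complex.zero_im]
  have hx0mem : (n:ℂ) • single i0 i0 1 - 1 ∈ sb n := sbAux_x0_mem hn0 rfl
  set x₀ : sb n := ⟨_, hx0mem⟩ with hx₀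
  set f : Module.End ℝ (sb n) := (LieAlgebra.ad ℝ (sb n)) x₀ with hf
  have hsmulRC : ∀ M : Matrix (Fin n) (Fin n) ℂ, (n:ℝ) • M = (n:ℂ) • M := by
    intro M
    rw [Nat.cast_smul_eq_nsmul, Nat.cast_smul_eq_nsmul]
  have hnR : (n:ℝ) ≠ 0 := Nat.cast_ne_zero.mpr (by omega)
  have hcoe : ∀ (r : ℝ) (z : sb n), ((r • z : sb n) : Matrix (Fin n) (Fin n) ℂ)
      = r • (z : Matrix (Fin n) (Fin n) ℂ) := fun r z => rfl
  have hbr : ∀ z : sb n, ((⁅x₀, z⁆ : sb n) : Matrix (Fin n) (Fin n) ℂ)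
      = ((n:ℂ) • single i0 i0 1 - 1) * (z : Matrix (Fin n) (Fin n) ℂ)
        - (z : Matrix (Fin n) (Fin n) ℂ) * ((n:ℂ) • single i0 i0 1 - 1) :=
    fun z => rfl
  have hff : f ∘ₗ f = (n:ℝ) • f := by
    apply LinearMap.ext
    intro y
    apply Subtype.ext
    have hcol : ∀ a : Fin n, a ≠ i0 → (y : Matrix (Fin n) (Fin n) ℂ) a i0 = 0 := by
      intro a ha
      refine y.2.1 a i0 ?_
      rw [Fin.lt_def, hi0]
      exact Nat.pos_of_ne_zero (by simpa [hi0] using Fin.val_ne_of_ne ha)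
    simp only [LinearMap.comp_apply, LinearMap.smul_apply, hf, LieAlgebra.ad_apply]
    rw [hbr, hbr, hcoe, hbr, hsmulRC]
    exact sbAux_key i0 y hcol
  set P : Module.End ℝ (sb n) := (n:ℝ)⁻¹ • f with hPdef
  have hPP : P ∘ₗ P = P := by
    rw [hPdef, LinearMap.smul_comp, LinearMap.comp_smul, hff, smul_smul, smul_smul]
    congr 1
    field_simp
  obtain ⟨p, hp⟩ := (LinearMap.isProj_iff_isIdempotentElem P).mpr hPP
  haveI hfd : FiniteDimensional ℝ (sb n) := inferInstance
  have htrP : LinearMap.trace ℝ (sb n) P = (Module.finrank ℝ p : ℝ) := hp.trace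
  have he01mem : single i0 i1 (1:ℂ) ∈ sb n := sbAux_stdBasis_mem hi01
  set e01 : sb n := ⟨_, he01mem⟩ with he01
  have hfe : f e01 = (n:ℝ) • e01 := by
    apply Subtype.ext
    simp only [hf, LieAlgebra.ad_apply]
    rw [hbr, hcoe, hsmulRC]
    show ((n:ℂ) • single i0 i0 1 - 1) * single i0 i1 1
        - single i0 i1 1 * ((n:ℂ) • single i0 i0 1 - 1)
        = (n:ℂ) • single i0 i1 1
    rw [sub_mul, mul_sub, Matrix.smul_mul, Matrix.mul_smul, one_mul, mul_one,
      Matrix.single_mul_single_same, Matrix.single_mul_single_of_ne _ _ _ _ hi01.ne', mul_one,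
      smul_zero, zero_sub]
    abel
  have hPe : P e01 = e01 := by
    rw [hPdef, LinearMap.smul_apply, hfe, smul_smul, inv_mul_cancel₀ hnR, one_smul]
  have he01ne : e01 ≠ 0 := by
    intro hcontra
    have h1 := Matrix.ext_iff.2 (congrArg Subtype.val hcontra) i0 i1
    rw [he01] at h1
    simp at h1
  have hmemp : e01 ∈ p := by rw [← hPe]; exact hp.map_mem e01
  haveI : Nontrivial p := by
    refine nontrivial_of_ne ⟨e01, hmemp⟩ 0 ?_
    intro hzero
    apply he01ne
    simpa using congrArg Subtype.val hzero
  have hpos : 0 < Module.finrank ℝ p := Module.finrank_pos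
  have hfeq : f = (n:ℝ) • P := by
    rw [hPdef, smul_smul, mul_inv_cancel₀ hnR, one_smul]
  have htrf : LinearMap.trace ℝ (sb n) f = (n:ℝ) * (Module.finrank ℝ p : ℝ) := by
    rw [hfeq, _root_.map_smul, htrP, smul_eq_mul]
  have hzero := htr0 x₀
  rw [← hf] at hzero
  rw [htrf] at hzero
  have : (0:ℝ) < (n:ℝ) * (Module.finrank ℝ p : ℝ) := by
    apply mul_pos
    · exact_mod_cast Nat.pos_of_ne_zero (by omega)
    · exact_mod_cast hpos
  linarith
end

section
/- For every n ≥ 1 and every traceless n×n complex matrix A, there exist a unique traceless skew-Hermitian matrix B (Bᴴ = −B, tr B = 0) and a unique traceless upper triangular matrix C with real diagonal entries (C i j = 0 for i > j, C i i ∈ ℝ, tr C = 0) such that A = B + C. In other words, as real vector spaces, sl(n,ℂ) = su(n) ⊕ sb(n,ℂ). -/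
/-!
The `su(n)`-component `B` of `A` is forced: it has to agree with `A` strictly below the
diagonal, skew-Hermitianity then fixes it strictly above, and on the diagonal it must carry
the imaginary part of `A`. Its trace is `i · Im (tr A)`, so both components of a traceless `A`
are traceless. Uniqueness holds because a skew-Hermitian matrix that is upper triangular with
real diagonal vanishes.
-/

open Matrix

namespace Matrix

variable {ι : Type*} [LinearOrder ι]

def skewLowerPart (A : Matrix ι ι ℂ) : Matrix ι ι ℂ :=
  of fun i j =>
    if j < i then A i j else if i < j then -star (A j i) else ((A i i).im : ℂ) * Complex.I

lemma skewLowerPart_apply_self (A : Matrix ι ι ℂ) (i : ι) :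
    skewLowerPart A i i = ((A i i).im : ℂ) * Complex.I := by
  simp [skewLowerPart]

lemma conjTranspose_skewLowerPart (A : Matrix ι ι ℂ) :
    (skewLowerPart A)ᴴ = -skewLowerPart A := by
  ext i j
  rcases lt_trichotomy i j with h | rfl | h
  · simp [skewLowerPart, h, h.not_gt]
  · simp [skewLowerPart_apply_self]
  · simp [skewLowerPart, h, h.not_gt]

lemma trace_skewLowerPart [Fintype ι] (A : Matrix ι ι ℂ) :
    (skewLowerPart A).trace = (A.trace.im : ℂ) * Complex.I := by
  simp only [trace, diag, skewLowerPart_apply_self, ← Finset.sum_mul, Complex.im_sum,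
    Complex.ofReal_sum]

lemma sub_skewLowerPart_apply_of_lt (A : Matrix ι ι ℂ) {i j : ι} (h : j < i) :
    (A - skewLowerPart A) i j = 0 := by
  simp [skewLowerPart, h]

lemma im_sub_skewLowerPart_apply_self (A : Matrix ι ι ℂ) (i : ι) :
    ((A - skewLowerPart A) i i).im = 0 := by
  simp [skewLowerPart_apply_self]

lemma eq_zero_of_conjTranspose_eq_neg_of_upperTriangular {B : Matrix ι ι ℂ}
    (hskew : Bᴴ = -B) (hlower : ∀ i j, j < i → B i j = 0) (hdiag : ∀ i, (B i i).im = 0) :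
    B = 0 := by
  have hentry : ∀ i j, star (B j i) = -B i j := fun i j => congrFun (congrFun hskew i) j
  ext i j
  rcases lt_trichotomy i j with h | rfl | h
  · simpa [hlower j i h] using hentry i j
  · have hre : (B i i).re = 0 := by
      have := congrArg Complex.re (hentry i i)
      simp only [Complex.star_def, Complex.conj_re, Complex.neg_re] at this
      linarith
    exact Complex.ext hre (hdiag i)
  · exact hlower i j h

end Matrix

theorem sl_eq_su_oplus_sb_general (n : ℕ)
    (A : Matrix (Fin n) (Fin n) ℂ) (hA : A.trace = 0) :
    ∃! p : Matrix (Fin n) (Fin n) ℂ × Matrix (Fin n) (Fin n) ℂ,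
      (p.1ᴴ = -p.1 ∧ p.1.trace = 0)
        ∧ ((∀ i j, j < i → p.2 i j = 0) ∧ (∀ i, (p.2 i i).im = 0) ∧ p.2.trace = 0)
        ∧ A = p.1 + p.2 := by
  have htrace : (skewLowerPart A).trace = 0 := by simp [trace_skewLowerPart, hA]
  refine ⟨(skewLowerPart A, A - skewLowerPart A),
    ⟨⟨conjTranspose_skewLowerPart A, htrace⟩,
      ⟨fun i j => sub_skewLowerPart_apply_of_lt A, im_sub_skewLowerPart_apply_self A,
        by rw [trace_sub, hA, htrace, sub_zero]⟩, (add_sub_cancel _ _).symm⟩, ?_⟩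
  rintro ⟨B, C⟩ ⟨⟨hB, -⟩, ⟨hClower, hCdiag, -⟩, hsum⟩
  dsimp only at hB hClower hCdiag hsum
  have hC : C = A - B := eq_sub_of_add_eq' hsum.symm
  have hsplit : B - skewLowerPart A = (A - skewLowerPart A) - C := by rw [hC]; abel
  have hdiff : B - skewLowerPart A = 0 := by
    refine eq_zero_of_conjTranspose_eq_neg_of_upperTriangular ?_ (fun i j h => ?_) (fun i => ?_)
    · rw [conjTranspose_sub, hB, conjTranspose_skewLowerPart, neg_sub_neg, neg_sub]
    · rw [hsplit, Matrix.sub_apply, sub_skewLowerPart_apply_of_lt A h, hClower i j h, sub_zero]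
    · rw [hsplit, Matrix.sub_apply, Complex.sub_im, im_sub_skewLowerPart_apply_self, hCdiag,
        sub_zero]
  have hBeq : B = skewLowerPart A := sub_eq_zero.mp hdiff
  simp [hC, hBeq]

/-- Every traceless `n × n` complex matrix `A` decomposes uniquely as `A = B + C` with
`B` traceless skew-Hermitian (`B ∈ su(n)`) and `C` traceless upper triangular with real
diagonal entries (`C ∈ sb(n,ℂ)`): as real vector spaces,
`sl(n,ℂ) = su(n) ⊕ sb(n,ℂ)`. -/
theorem sl_eq_su_oplus_sb (n : ℕ) (hn : 1 ≤ n)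
    (A : Matrix (Fin n) (Fin n) ℂ) (hA : A.trace = 0) :
    ∃! p : Matrix (Fin n) (Fin n) ℂ × Matrix (Fin n) (Fin n) ℂ,
      (p.1ᴴ = -p.1 ∧ p.1.trace = 0)
        ∧ ((∀ i j, j < i → p.2 i j = 0) ∧ (∀ i, (p.2 i i).im = 0) ∧ p.2.trace = 0)
        ∧ A = p.1 + p.2 :=
  sl_eq_su_oplus_sb_general n A hA
end
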